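/- Let 1 < α < 2 be real and, for integers l ≥ 2 and n ≥ 0, define f₃(l, n) = [ 2 ( (n + 1)(n + α/2 + l)/(n + l + 1) − (n + α/2) )² · (n + l + 1)/(n + α/2) ] / [ 2( (n + α/2)(n + l + 1) + (n + 1)(n + l + α/2) ) ]. Then f₃(l, n) < (2 − α)² / (α(2 + α)) for all integers l ≥ 2, n ≥ 0, and sup_{l ≥ 2, n ≥ 0} f₃(l, n) = (2 − α)² / (α(2 + α)). -/
import Mathlib


/-- The quantity `f₃(l, n)` from the paper. -/
noncomputable def f₃ (α : ℝ) (l n : ℕ) : ℝ :=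
  (2 * (((n : ℝ) + 1) * ((n : ℝ) + α / 2 + (l : ℝ)) / ((n : ℝ) + (l : ℝ) + 1) -
        ((n : ℝ) + α / 2)) ^ 2 *
      (((n : ℝ) + (l : ℝ) + 1) / ((n : ℝ) + α / 2))) /
    (2 * (((n : ℝ) + α / 2) * ((n : ℝ) + (l : ℝ) + 1) +
        ((n : ℝ) + 1) * ((n : ℝ) + (l : ℝ) + α / 2)))

lemma f3_eq (α : ℝ) (hα : 0 < α) (l n : ℕ) :
    f₃ α l n = ((2 - α) * l) ^ 2 /
      (4 * ((n : ℝ) + l + 1) * ((n : ℝ) + α / 2) *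
        (((n : ℝ) + α / 2) * ((n : ℝ) + l + 1) + ((n : ℝ) + 1) * ((n : ℝ) + l + α / 2))) := by
  have hm : (0:ℝ) < (n : ℝ) + l + 1 := by positivity
  have ha : (0:ℝ) < (n : ℝ) + α / 2 := by positivity
  have hD : (0:ℝ) < ((n : ℝ) + α / 2) * ((n : ℝ) + l + 1) + ((n : ℝ) + 1) * ((n : ℝ) + l + α / 2) := by
    positivity
  unfold f₃
  field_simp
  ring

lemma f3_zero (α : ℝ) (hα : 0 < α) (l : ℕ) (hl : 1 ≤ l) :
    f₃ α l 0 = (2 - α) ^ 2 / (α * (1 + 1/(l:ℝ)) * ((α + 2) + 2 * α * (1/(l:ℝ)))) := by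
  have hl' : (0:ℝ) < (l:ℝ) := by exact_mod_cast hl
  rw [f3_eq α hα l 0]
  push_cast
  field_simp
  ring

theorem sup_f₃ (α : ℝ) (hα1 : 1 < α) (hα2 : α < 2) :
    (∀ l n : ℕ, 2 ≤ l → f₃ α l n < (2 - α) ^ 2 / (α * (2 + α))) ∧
    IsLUB {y : ℝ | ∃ l n : ℕ, 2 ≤ l ∧ y = f₃ α l n} ((2 - α) ^ 2 / (α * (2 + α))) := by
  have hα : (0:ℝ) < α := by linarith
  have h2a : (0:ℝ) < 2 - α := by linarith
  have hlt : ∀ l n : ℕ, 2 ≤ l → f₃ α l n < (2 - α) ^ 2 / (α * (2 + α)) := by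
    intro l n hl
    have hl' : (2:ℝ) ≤ (l:ℝ) := by exact_mod_cast hl
    have hn : (0:ℝ) ≤ (n:ℝ) := Nat.cast_nonneg n
    rw [f3_eq α hα l n]
    have hm : (0:ℝ) < (n : ℝ) + l + 1 := by positivity
    have ha : (0:ℝ) < (n : ℝ) + α / 2 := by positivity
    have hD : (0:ℝ) < 4 * ((n : ℝ) + l + 1) * ((n : ℝ) + α / 2) *
        (((n : ℝ) + α / 2) * ((n : ℝ) + l + 1) + ((n : ℝ) + 1) * ((n : ℝ) + l + α / 2)) := by
      positivity
    rw [div_lt_div_iff₀ hD (by positivity)]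
    have key : α * (2 + α) * (l:ℝ) ^ 2 <
        4 * ((n:ℝ) + (l:ℝ) + 1) * ((n:ℝ) + α / 2) *
          (((n:ℝ) + α / 2) * ((n:ℝ) + (l:ℝ) + 1) + ((n:ℝ) + 1) * ((n:ℝ) + (l:ℝ) + α / 2)) := by
      set x := (n:ℝ); set y := (l:ℝ)
      nlinarith [mul_nonneg hn hn, mul_nonneg (mul_nonneg hn hn) hn, mul_nonneg hn (by linarith : (0:ℝ) ≤ y),
        mul_nonneg (mul_nonneg hn hn) (by linarith : (0:ℝ) ≤ y), mul_nonneg hn (mul_nonneg (by linarith : (0:ℝ) ≤ y) (by linarith : (0:ℝ) ≤ y)),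
        mul_nonneg hn (by linarith : (0:ℝ) ≤ α), sq_nonneg (x*y), mul_pos (by linarith : (0:ℝ) < y) (by linarith : (0:ℝ) < α),
        mul_nonneg (mul_nonneg hn hn) (by linarith : (0:ℝ) ≤ α), mul_nonneg (mul_nonneg hn (by linarith : (0:ℝ) ≤ y)) (by linarith : (0:ℝ) ≤ α),
        mul_pos (mul_pos (by linarith : (0:ℝ) < y) (by linarith : (0:ℝ) < y)) (by linarith : (0:ℝ) < α),
        mul_pos (mul_pos (by linarith : (0:ℝ) < y) (by linarith : (0:ℝ) < α)) (by linarith : (0:ℝ) < α)]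
    nlinarith [mul_lt_mul_of_pos_left key (by positivity : (0:ℝ) < (2-α)^2)]
  refine ⟨hlt, ?_, ?_⟩
  · rintro y ⟨l, n, hl, rfl⟩
    exact (hlt l n hl).le
  · intro y hy
    have htend : Filter.Tendsto (fun l : ℕ => f₃ α l 0) Filter.atTop
        (nhds ((2 - α) ^ 2 / (α * (2 + α)))) := by
      have h1 : Filter.Tendsto (fun l : ℕ => 1/(l:ℝ)) Filter.atTop (nhds 0) :=
        tendsto_one_div_atTop_nhds_zero_nat
      have hc : ContinuousAt (fun t : ℝ => (2 - α) ^ 2 / (α * (1 + t) * ((α + 2) + 2 * α * t))) 0 := by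
        apply ContinuousAt.div continuousAt_const (by fun_prop)
        norm_num
        constructor <;> nlinarith
      have := hc.tendsto.comp h1
      have heq : (2 - α) ^ 2 / (α * (1 + 0) * ((α + 2) + 2 * α * 0)) = (2 - α) ^ 2 / (α * (2 + α)) := by
        ring_nf
      rw [heq] at this
      apply this.congr'
      filter_upwards [Filter.eventually_ge_atTop 1] with l hl
      exact (f3_zero α hα l hl).symm
    exact le_of_tendsto htend (by
      filter_upwards [Filter.eventually_ge_atTop 2] with l hl
      exact hy ⟨l, 0, hl, rfl⟩)
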